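/- arXiv:1308.1361 — 2 statements merged into one kernel-verified Lean document; each statement's English description precedes it below -/
import Mathlib

section
/- Every nonnegative solution u of ∂_t u − Δu + u^q = 0 on ℝ^N × (0,∞) satisfies u(x,t) ≤ (q−1)^{−1/(q−1)} t^{−1/(q−1)} for all (x,t) ∈ ℝ^N × (0,∞). -/
open MeasureTheory Real

open Filter Set

/-- lap as sum of 1D second derivatives -/
theorem lap_eq' (N : ℕ) (f : (Fin N → ℝ) → ℝ) (x : Fin N → ℝ) :
    (∑ i, deriv (fun a => deriv (fun b => f (Function.update (Function.update x i a) i b))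
        ((Function.update x i a) i)) (x i))
      = ∑ i, deriv (deriv (fun a => f (Function.update x i a))) (x i) := by
  refine Finset.sum_congr rfl fun i _ => ?_
  congr 1
  funext a
  simp [Function.update_idem]

theorem left_max_deriv_nonneg {f : ℝ → ℝ} {x f' : ℝ}
    (hd : HasDerivAt f f' x) (h : ∀ᶠ y in nhdsWithin x (Iio x), f y ≤ f x) : 0 ≤ f' := by
  have ht : Tendsto (slope f x) (nhdsWithin x (Iio x)) (nhds f') :=
    (hasDerivAt_iff_tendsto_slope.mp hd).mono_left
      (nhdsWithin_mono x (fun y hy => ne_of_lt hy))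
  refine ge_of_tendsto ht ?_
  filter_upwards [h, self_mem_nhdsWithin] with y hy hy'
  rw [slope_def_field]
  have h1 : f y - f x ≤ 0 := by linarith
  have h2 : y - x < 0 := by simpa [sub_neg] using hy'
  exact div_nonneg_iff.mpr (Or.inr ⟨h1, h2.le⟩)

theorem second_deriv_nonpos_of_localmax {f f' : ℝ → ℝ} {x c : ℝ}
    (hf : ∀ᶠ y in nhds x, HasDerivAt f (f' y) y)
    (hf' : HasDerivAt f' c x) (hmax : IsLocalMax f x) : c ≤ 0 := by
  by_contra hc
  push_neg at hc
  have hx0 : f' x = 0 := by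
    have := hmax.deriv_eq_zero
    rwa [hf.self_of_nhds.deriv] at this
  -- f' is positive on a right neighborhood
  have hslope : Tendsto (slope f' x) (nhdsWithin x (Ioi x)) (nhds c) :=
    (hasDerivAt_iff_tendsto_slope.mp hf').mono_left
      (nhdsWithin_mono x (fun y hy => ne_of_gt hy))
  have hev : ∀ᶠ y in nhdsWithin x (Ioi x), 0 < f' y := by
    filter_upwards [hslope.eventually (eventually_gt_nhds hc), self_mem_nhdsWithin]
      with y hy hy'
    rw [slope_def_field, hx0, sub_zero] at hy
    have h2 : 0 < y - x := by simpa [sub_pos] using hy'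
    have := mul_pos hy h2
    calc (0:ℝ) < f' y / (y - x) * (y - x) := this
    _ = f' y := by field_simp
  obtain ⟨b, hb, hb2⟩ := (mem_nhdsGT_iff_exists_Ioo_subset).mp hev
  obtain ⟨ε, hε, hball⟩ := Metric.eventually_nhds_iff.mp (hf.and hmax)
  set b' := min b (x + ε/2) with hb'
  have hxb' : x < b' := lt_min hb (by linarith)
  have hsub : Icc x b' ⊆ Metric.ball x ε := by
    intro y hy
    simp only [Metric.mem_ball, Real.dist_eq, abs_lt]
    constructor
    · have := hy.1; linarith
    · have := hy.2; have : y ≤ x + ε/2 := le_trans this (min_le_right _ _); linarith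
  have hmono : StrictMonoOn f (Icc x b') := by
    apply strictMonoOn_of_deriv_pos (convex_Icc _ _)
    · intro y hy
      exact ((hball (by simpa [Real.dist_eq] using hsub hy)).1).continuousAt.continuousWithinAt
    · intro y hy
      rw [interior_Icc] at hy
      have hder := (hball (by
        have : y ∈ Icc x b' := ⟨hy.1.le, hy.2.le⟩
        simpa [Real.dist_eq] using hsub this)).1
      rw [hder.deriv]
      exact hb2 ⟨hy.1, lt_of_lt_of_le hy.2 (min_le_left _ _)⟩
  have h1 : f x < f b' := hmono (left_mem_Icc.mpr hxb'.le) (right_mem_Icc.mpr hxb'.le) hxb'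
  have hb'mem : dist b' x < ε := by
    rw [Real.dist_eq, abs_lt]
    have : b' ≤ x + ε/2 := min_le_right _ _
    constructor <;> linarith [hxb']
  have h2 : f b' ≤ f x := (hball hb'mem).2
  linarith

theorem add_rpow_ge {a b p : ℝ} (ha : 0 ≤ a) (hb : 0 ≤ b) (hp : 1 ≤ p) :
    a ^ p + b ^ p ≤ (a + b) ^ p := by
  have hab : 0 ≤ a + b := by linarith
  have key : ∀ x : ℝ, 0 ≤ x → x ≤ a + b → x ^ p ≤ x * (a + b) ^ (p - 1) := by
    intro x hx hxab
    have h1 : x ^ p = x * x ^ (p - 1) := by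
      have := Real.rpow_add' hx (show (1:ℝ) + (p-1) ≠ 0 by intro h; simp at h; linarith)
      rw [show (1:ℝ) + (p-1) = p by ring] at this
      rw [this, Real.rpow_one]
    rw [h1]
    exact mul_le_mul_of_nonneg_left (Real.rpow_le_rpow hx hxab (by linarith)) hx
  calc a ^ p + b ^ p ≤ a * (a+b)^(p-1) + b * (a+b)^(p-1) :=
        add_le_add (key a ha (by linarith)) (key b hb (by linarith))
    _ = (a + b) * (a+b)^(p-1) := by ring
    _ = (a + b) ^ p := by
        have := Real.rpow_add' hab (show (1:ℝ) + (p-1) ≠ 0 by intro h; simp at h; linarith)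
        rw [show (1:ℝ) + (p-1) = p by ring] at this
        rw [this, Real.rpow_one]

section slices
variable {N : ℕ} {u : (Fin N → ℝ) → ℝ → ℝ}
  (hreg : ContDiffOn ℝ 2 (fun z : (Fin N → ℝ) × ℝ => u z.1 z.2) {z | 0 < z.2})

theorem isOpen_pos : IsOpen {z : (Fin N → ℝ) × ℝ | 0 < z.2} :=
  isOpen_Ioi.preimage continuous_snd

theorem line_contDiff (x : Fin N → ℝ) (i : Fin N) :
    ContDiff ℝ 2 (fun a : ℝ => Function.update x i a) := by
  refine contDiff_pi.mpr fun j => ?_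
  rcases eq_or_ne j i with rfl | h
  · simpa [Function.update_apply] using contDiff_fun_id
  · simp only [Function.update_apply, if_neg h]
    exact contDiff_const

include hreg in
theorem slice_contDiff (x : Fin N → ℝ) (t : ℝ) (ht : 0 < t) (i : Fin N) :
    ContDiff ℝ 2 (fun a => u (Function.update x i a) t) := by
  rw [← contDiffOn_univ]
  have hm : Set.MapsTo (fun a : ℝ => (Function.update x i a, t)) univ
      {z : (Fin N → ℝ) × ℝ | 0 < z.2} := fun a _ => ht
  exact hreg.comp (((line_contDiff x i).prodMk contDiff_const).contDiffOn) hm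

include hreg in
theorem slice_diff2 (x : Fin N → ℝ) (t : ℝ) (ht : 0 < t) (i : Fin N) :
    (∀ a, HasDerivAt (fun a => u (Function.update x i a) t)
       (deriv (fun a => u (Function.update x i a) t) a) a) ∧
    HasDerivAt (deriv (fun a => u (Function.update x i a) t))
       (deriv (deriv (fun a => u (Function.update x i a) t)) (x i)) (x i) := by
  have h2 := slice_contDiff hreg x t ht i
  rw [show (2 : WithTop ℕ∞) = 1 + 1 from rfl, contDiff_succ_iff_deriv] at h2
  exact ⟨fun a => (h2.1 a).hasDerivAt,
    ((h2.2.2.differentiable one_ne_zero) (x i)).hasDerivAt⟩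

include hreg in
theorem time_hasDerivAt (x : Fin N → ℝ) (t : ℝ) (ht : 0 < t) :
    HasDerivAt (u x) (deriv (u x) t) t := by
  have hc : ContDiffAt ℝ 2 (fun z : (Fin N → ℝ) × ℝ => u z.1 z.2) (x, t) :=
    hreg.contDiffAt (isOpen_pos.mem_nhds ht)
  have hline : ContDiffAt ℝ 2 (fun s : ℝ => ((x, s) : (Fin N → ℝ) × ℝ)) t :=
    (contDiff_const.prodMk contDiff_id).contDiffAt
  have : DifferentiableAt ℝ (u x) t := by
    have := (hc.comp t hline).differentiableAt (by norm_num)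
    exact this
  exact this.hasDerivAt

include hreg in
theorem u_continuousOn : ContinuousOn (fun z : (Fin N → ℝ) × ℝ => u z.1 z.2) {z | 0 < z.2} :=
  hreg.continuousOn

end slices

theorem base_hasDerivAt (d p a : ℝ) :
    HasDerivAt (fun a : ℝ => d - (a - p)^2) (-(2*(a-p))) a := by
  have h1 : HasDerivAt (fun a : ℝ => a - p) 1 a := (hasDerivAt_id a).sub_const p
  have h2 := h1.pow 2
  have h3 := h2.const_sub d
  exact h3.congr_deriv (by ring)

theorem psi_deriv1 {K β d p a : ℝ} (h : 0 < d - (a - p)^2) :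
    HasDerivAt (fun a : ℝ => K * (d - (a-p)^2) ^ (-β))
      (2*K*β * ((a-p) * (d - (a-p)^2) ^ (-β-1))) a := by
  have hb := (base_hasDerivAt d p a).rpow_const (p := -β) (Or.inl (ne_of_gt h))
  have := hb.const_mul K
  exact this.congr_deriv (by ring)

theorem psi_deriv2 {K β d p a : ℝ} (h : 0 < d - (a - p)^2) :
    HasDerivAt (fun a : ℝ => 2*K*β * ((a-p) * (d - (a-p)^2) ^ (-β-1)))
      (2*K*β * (d-(a-p)^2)^(-β-1) + 4*K*β*(β+1)*((a-p)^2 * (d-(a-p)^2)^(-β-2))) a := by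
  have h1 : HasDerivAt (fun a : ℝ => a - p) 1 a := (hasDerivAt_id a).sub_const p
  have hb := (base_hasDerivAt d p a).rpow_const (p := -β-1) (Or.inl (ne_of_gt h))
  have hmul := (h1.mul hb).const_mul (2*K*β)
  exact hmul.congr_deriv (by rw [show -β-1-1 = -β-2 by ring]; ring)

theorem phi_deriv {Cc α s t : ℝ} (h : 0 < t - s) :
    HasDerivAt (fun t : ℝ => Cc * (t - s) ^ (-α)) (-(Cc * α * (t - s) ^ (-α-1))) t := by
  have h1 : HasDerivAt (fun t : ℝ => t - s) 1 t := (hasDerivAt_id t).sub_const s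
  have hb := h1.rpow_const (p := -α) (Or.inl (ne_of_gt h))
  have := hb.const_mul Cc
  exact this.congr_deriv (by ring)

theorem r2_update {N : ℕ} (x₀ x : Fin N → ℝ) (i : Fin N) (a : ℝ) :
    ∑ j, (Function.update x i a j - x₀ j)^2
      = (∑ j, (x j - x₀ j)^2) - (x i - x₀ i)^2 + (a - x₀ i)^2 := by
  have key : ∀ y : Fin N → ℝ, ∑ j, (y j - x₀ j)^2
      = (y i - x₀ i)^2 + ∑ j ∈ Finset.univ.erase i, (y j - x₀ j)^2 := fun y =>
    (Finset.add_sum_erase _ _ (Finset.mem_univ i)).symm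
  rw [key, key x]
  have he : ∑ j ∈ Finset.univ.erase i, (Function.update x i a j - x₀ j)^2
      = ∑ j ∈ Finset.univ.erase i, (x j - x₀ j)^2 :=
    Finset.sum_congr rfl fun j hj => by
      rw [Function.update_of_ne (Finset.ne_of_mem_erase hj)]
  rw [he, Function.update_self]
  ring

theorem r2_continuous {N : ℕ} (x₀ : Fin N → ℝ) :
    Continuous (fun x : Fin N → ℝ => ∑ j, (x j - x₀ j)^2) := by
  exact continuous_finset_sum _ fun j _ => ((continuous_apply j).sub continuous_const).pow 2

theorem isCompact_ball2 {N : ℕ} (x₀ : Fin N → ℝ) {ρ : ℝ} (hρ : 0 ≤ ρ) :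
    IsCompact {x : Fin N → ℝ | ∑ j, (x j - x₀ j)^2 ≤ ρ} := by
  apply Metric.isCompact_of_isClosed_isBounded
  · exact isClosed_Iic.preimage (r2_continuous x₀)
  · apply Bornology.IsBounded.subset (Metric.isBounded_closedBall (x := x₀) (r := Real.sqrt ρ))
    intro x hx
    simp only [Metric.mem_closedBall]
    rw [dist_pi_le_iff (Real.sqrt_nonneg ρ)]
    intro b
    have h1 : (x b - x₀ b)^2 ≤ ρ := by
      refine le_trans ?_ hx
      exact Finset.single_le_sum (f := fun j => (x j - x₀ j)^2)
        (fun j _ => sq_nonneg _) (Finset.mem_univ b)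
    have : |x b - x₀ b| ≤ Real.sqrt ρ := by
      rw [← Real.sqrt_sq_eq_abs]
      exact Real.sqrt_le_sqrt h1
    simpa [Real.dist_eq] using this

/-- Partial derivative in the `i`-th coordinate direction. -/
noncomputable def pderiv (N : ℕ) (i : Fin N) (f : (Fin N → ℝ) → ℝ) (x : Fin N → ℝ) : ℝ :=
  deriv (fun a => f (Function.update x i a)) (x i)

/-- The Laplacian of a function on `ℝ^N`. -/
noncomputable def lap (N : ℕ) (f : (Fin N → ℝ) → ℝ) (x : Fin N → ℝ) : ℝ :=
  ∑ i, pderiv N i (pderiv N i f) x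

theorem lap_eq (N : ℕ) (f : (Fin N → ℝ) → ℝ) (x : Fin N → ℝ) :
    lap N f x = ∑ i, deriv (deriv (fun a => f (Function.update x i a))) (x i) := by
  simp only [lap, pderiv]
  exact lap_eq' N f x

set_option maxHeartbeats 2000000 in
theorem core_bound
    (N : ℕ) (q : ℝ) (hq : 1 < q)
    (u : (Fin N → ℝ) → ℝ → ℝ)
    (hreg : ContDiffOn ℝ 2 (fun z : (Fin N → ℝ) × ℝ => u z.1 z.2) {z | 0 < z.2})
    (hnn : ∀ x t, 0 < t → 0 ≤ u x t)
    (hsol : ∀ x t, 0 < t →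
      deriv (u x) t - lap N (fun y => u y t) x + u x t ^ q = 0)
    (x₀ : Fin N → ℝ) (t₀ s R : ℝ) (hs : 0 < s) (hst : s < t₀) (hR : 0 < R) :
    u x₀ t₀ ≤ (q-1) ^ (-(1/(q-1))) * (t₀ - s) ^ (-(1/(q-1)))
      + ((2*N*(2/(q-1)) + 4*(2/(q-1))*((2/(q-1))+1)) * R^2) ^ (1/(q-1)) * (R^2) ^ (-(2/(q-1))) := by
  have hq1 : (0:ℝ) < q - 1 := by linarith
  set α : ℝ := 1/(q-1) with hα_def
  set β : ℝ := 2/(q-1) with hβ_def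
  have hα : 0 < α := by positivity
  have hβ : 0 < β := by positivity
  set Cc : ℝ := (q-1) ^ (-α) with hCc_def
  have hCc : 0 < Cc := Real.rpow_pos_of_pos hq1 _
  set E : ℝ := (2*N*β + 4*β*(β+1)) * R^2 with hE_def
  have hE : 0 < E := by positivity
  set K : ℝ := E ^ α with hK_def
  have hK : 0 < K := Real.rpow_pos_of_pos hE _
  -- the r2 function
  set r2 : (Fin N → ℝ) → ℝ := fun x => ∑ j, (x j - x₀ j)^2 with hr2_def
  have hr2nn : ∀ x, 0 ≤ r2 x := fun x => Finset.sum_nonneg fun j _ => sq_nonneg _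
  have hr2x₀ : r2 x₀ = 0 := by simp [hr2_def]
  -- the sup of u on the big cylinder
  have hcpt₀ : IsCompact ({x : Fin N → ℝ | r2 x ≤ R^2} ×ˢ Icc s t₀) :=
    (isCompact_ball2 x₀ (by positivity)).prod isCompact_Icc
  have hne₀ : (({x : Fin N → ℝ | r2 x ≤ R^2} ×ˢ Icc s t₀)).Nonempty :=
    ⟨(x₀, t₀), ⟨by simp only [mem_setOf_eq, hr2x₀]; positivity, hst.le, le_rfl⟩⟩
  have hsub₀ : ({x : Fin N → ℝ | r2 x ≤ R^2} ×ˢ Icc s t₀) ⊆ {z : (Fin N → ℝ) × ℝ | 0 < z.2} :=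
    fun z hz => lt_of_lt_of_le hs hz.2.1
  obtain ⟨zB, hzB, hzBmax⟩ := hcpt₀.exists_isMaxOn hne₀ (hreg.continuousOn.mono hsub₀)
  set B : ℝ := u zB.1 zB.2 with hB_def
  have hB0 : 0 ≤ B := hnn _ _ (hsub₀ hzB)
  have hBle : ∀ z ∈ ({x : Fin N → ℝ | r2 x ≤ R^2} ×ˢ Icc s t₀), u z.1 z.2 ≤ B :=
    fun z hz => hzBmax hz
  -- spatial margin
  set δx : ℝ := min (R^2/2) ((K/(B+1)) ^ β⁻¹) with hδx_def
  have hδx : 0 < δx := lt_min (by positivity) (Real.rpow_pos_of_pos (by positivity) _)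
  set ρ : ℝ := R^2 - δx with hρ_def
  have hρpos : 0 < ρ := by
    have h1 : δx ≤ R^2/2 := min_le_left _ _
    have h2 : 0 < R^2 := by positivity
    simp only [hρ_def]; linarith
  have hρR : ρ < R^2 := by simp only [hρ_def]; linarith
  have hψbound : B + 1 ≤ K * δx ^ (-β) := by
    have h1 : ((K/(B+1)) ^ β⁻¹ : ℝ) ^ (-β) ≤ δx ^ (-β) :=
      Real.rpow_le_rpow_of_nonpos hδx (min_le_right _ _) (by linarith)
    have h2 : ((K/(B+1)) ^ β⁻¹ : ℝ) ^ (-β) = (B+1)/K := by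
      rw [← Real.rpow_mul (le_of_lt (by positivity : (0:ℝ) < K/(B+1)))]
      rw [show β⁻¹ * -β = -1 by field_simp]
      rw [Real.rpow_neg_one, inv_div]
    calc B+1 = K * ((B+1)/K) := by field_simp
    _ ≤ K * δx ^ (-β) := by
        refine mul_le_mul_of_nonneg_left ?_ hK.le
        rw [← h2]; exact h1
  -- temporal margin
  set δt : ℝ := min ((t₀ - s)/2) ((Cc/(B+1)) ^ α⁻¹) with hδt_def
  have hδt : 0 < δt := lt_min (by linarith) (Real.rpow_pos_of_pos (by positivity) _)
  set s' : ℝ := s + δt with hs'_def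
  have hss' : s < s' := by simp only [hs'_def]; linarith
  have hs't₀ : s' < t₀ := by
    have : δt ≤ (t₀ - s)/2 := min_le_left _ _
    simp only [hs'_def]; linarith
  have hφbound : B + 1 ≤ Cc * δt ^ (-α) := by
    have h1 : ((Cc/(B+1)) ^ α⁻¹ : ℝ) ^ (-α) ≤ δt ^ (-α) :=
      Real.rpow_le_rpow_of_nonpos hδt (min_le_right _ _) (by linarith)
    have h2 : ((Cc/(B+1)) ^ α⁻¹ : ℝ) ^ (-α) = (B+1)/Cc := by
      rw [← Real.rpow_mul (le_of_lt (by positivity : (0:ℝ) < Cc/(B+1)))]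
      rw [show α⁻¹ * -α = -1 by field_simp]
      rw [Real.rpow_neg_one, inv_div]
    calc B+1 = Cc * ((B+1)/Cc) := by field_simp
    _ ≤ Cc * δt ^ (-α) := by
        refine mul_le_mul_of_nonneg_left ?_ hCc.le
        rw [← h2]; exact h1
  -- the comparison function and the compact domain
  set v : (Fin N → ℝ) × ℝ → ℝ := fun z =>
    u z.1 z.2 - Cc * (z.2 - s) ^ (-α) - K * (R^2 - r2 z.1) ^ (-β) with hv_def
  set D : Set ((Fin N → ℝ) × ℝ) := {x : Fin N → ℝ | r2 x ≤ ρ} ×ˢ Icc s' t₀ with hD_def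
  have hDsub₀ : D ⊆ ({x : Fin N → ℝ | r2 x ≤ R^2} ×ˢ Icc s t₀) := fun z hz =>
    ⟨le_trans hz.1 hρR.le, ⟨le_trans hss'.le hz.2.1, hz.2.2⟩⟩
  have hDpos : D ⊆ {z : (Fin N → ℝ) × ℝ | 0 < z.2} := fun z hz => hsub₀ (hDsub₀ hz)
  have hcptD : IsCompact D := (isCompact_ball2 x₀ hρpos.le).prod isCompact_Icc
  have hneD : D.Nonempty :=
    ⟨(x₀, t₀), ⟨by simp only [mem_setOf_eq, hr2x₀]; exact hρpos.le, hs't₀.le, le_rfl⟩⟩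
  have hvcont : ContinuousOn v D := by
    refine ContinuousOn.sub (ContinuousOn.sub (hreg.continuousOn.mono hDpos) ?_) ?_
    · refine ContinuousOn.mul continuousOn_const (ContinuousOn.rpow_const ?_ ?_)
      · exact (continuous_snd.sub continuous_const).continuousOn
      · intro z hz
        left
        have : s' ≤ z.2 := hz.2.1
        have : 0 < z.2 - s := by linarith
        exact ne_of_gt this
    · refine ContinuousOn.mul continuousOn_const (ContinuousOn.rpow_const ?_ ?_)
      · exact (continuous_const.sub ((r2_continuous x₀).comp continuous_fst)).continuousOn
      · intro z hz
        left
        have h1 : r2 z.1 ≤ ρ := hz.1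
        have : 0 < R^2 - r2 z.1 := by linarith [hρR]
        exact ne_of_gt this
  obtain ⟨⟨xb, tb⟩, hzm, hmax⟩ := hcptD.exists_isMaxOn hneD hvcont
  have hmax' : ∀ z ∈ D, v z ≤ v (xb, tb) := fun z hz => hmax hz
  -- main claim : v (xb, tb) ≤ 0
  have hclaim : v (xb, tb) ≤ 0 := by
    by_contra hpos
    push_neg at hpos
    have hxbρ : r2 xb ≤ ρ := hzm.1
    have htbI : tb ∈ Icc s' t₀ := hzm.2
    have htb_pos : 0 < tb := lt_trans hs (lt_of_lt_of_le hss' htbI.1)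
    have hub : u xb tb ≤ B := hBle (xb, tb) (hDsub₀ hzm)
    have hτ : 0 < tb - s := by
      have := htbI.1; simp only [hs'_def] at this; linarith
    have hvval : v (xb, tb) = u xb tb - Cc * (tb - s) ^ (-α) - K * (R^2 - r2 xb) ^ (-β) := rfl
    -- boundary exclusion in space
    have hr2lt : r2 xb < ρ := by
      rcases lt_or_eq_of_le hxbρ with h | h
      · exact h
      · exfalso
        have hψ : K * (R^2 - r2 xb) ^ (-β) = K * δx ^ (-β) := by
          rw [h, show R^2 - ρ = δx by simp only [hρ_def]; ring]
        have hφ : 0 ≤ Cc * (tb - s) ^ (-α) := by positivity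
        rw [hvval, hψ] at hpos
        linarith [hψbound]
    -- boundary exclusion in time
    have hG : 0 < R^2 - r2 xb := by linarith
    have htb_gt : s' < tb := by
      rcases lt_or_eq_of_le htbI.1 with h | h
      · exact h
      · exfalso
        have hφ : Cc * (tb - s) ^ (-α) = Cc * δt ^ (-α) := by
          rw [← h, show s' - s = δt by simp only [hs'_def]; ring]
        have hψ : 0 ≤ K * (R^2 - r2 xb) ^ (-β) := by positivity
        rw [hvval, hφ] at hpos
        linarith [hφbound]
    have hGδ : δx < R^2 - r2 xb := by simp only [hρ_def] at hr2lt; linarith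
    have hGR : R^2 - r2 xb ≤ R^2 := by linarith [hr2nn xb]
    -- time derivative inequality
    have hTu := time_hasDerivAt hreg xb tb htb_pos
    have hTφ := phi_deriv (Cc := Cc) (α := α) (s := s) (t := tb) hτ
    have hT : HasDerivAt (fun t => u xb t - Cc * (t - s) ^ (-α) - K * (R^2 - r2 xb) ^ (-β))
        (deriv (u xb) tb - -(Cc * α * (tb - s) ^ (-α-1))) tb := (hTu.sub hTφ).sub_const _
    have hTmax : ∀ᶠ y in nhdsWithin tb (Iio tb),
        (fun t => u xb t - Cc * (t - s) ^ (-α) - K * (R^2 - r2 xb) ^ (-β)) y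
          ≤ (fun t => u xb t - Cc * (t - s) ^ (-α) - K * (R^2 - r2 xb) ^ (-β)) tb := by
      have hIoi : Ioi s' ∈ nhdsWithin tb (Iio tb) :=
        mem_nhdsWithin_of_mem_nhds (Ioi_mem_nhds htb_gt)
      filter_upwards [hIoi, self_mem_nhdsWithin] with y h1 h2
      have hyD : ((xb, y) : (Fin N → ℝ) × ℝ) ∈ D :=
        ⟨hxbρ, ⟨le_of_lt h1, le_trans (le_of_lt h2) htbI.2⟩⟩
      exact hmax' (xb, y) hyD
    have htime : 0 ≤ deriv (u xb) tb - -(Cc * α * (tb - s) ^ (-α-1)) :=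
      left_max_deriv_nonneg hT hTmax
    -- space second derivative inequalities
    have hspace : ∀ i : Fin N,
        deriv (deriv (fun a => u (Function.update xb i a) tb)) (xb i)
        ≤ 2*K*β * (R^2 - r2 xb) ^ (-β-1)
          + 4*K*β*(β+1) * ((xb i - x₀ i)^2 * (R^2 - r2 xb) ^ (-β-2)) := by
      intro i
      set d : ℝ := R^2 - (r2 xb - (xb i - x₀ i)^2) with hd_def
      set p : ℝ := x₀ i with hp_def
      have hdG : ∀ a, d - (a - p)^2 = R^2 - r2 (Function.update xb i a) := by
        intro a
        have h := r2_update x₀ xb i a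
        simp only [hr2_def, hd_def, hp_def]
        rw [h]; ring
      have hdx : d - (xb i - p)^2 = R^2 - r2 xb := by
        simp only [hd_def]; ring
      have hGd : 0 < d - (xb i - p)^2 := by rw [hdx]; exact hG
      obtain ⟨hgi, hgi2⟩ := slice_diff2 hreg xb tb htb_pos i
      have hcontb : ContinuousAt (fun a : ℝ => d - (a - p)^2) (xb i) := by fun_prop
      have hevpos : ∀ᶠ a in nhds (xb i), 0 < d - (a - p)^2 :=
        hcontb.eventually (eventually_gt_nhds hGd)
      have hf : ∀ᶠ a in nhds (xb i), HasDerivAt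
          (fun a => u (Function.update xb i a) tb - Cc * (tb - s) ^ (-α)
            - K * (d - (a - p)^2) ^ (-β))
          (deriv (fun a => u (Function.update xb i a) tb) a
            - 2*K*β * ((a - p) * (d - (a - p)^2) ^ (-β-1))) a := by
        filter_upwards [hevpos] with a ha
        exact ((hgi a).sub_const _).sub (psi_deriv1 ha)
      have hf' : HasDerivAt
          (fun a => deriv (fun a => u (Function.update xb i a) tb) a
            - 2*K*β * ((a - p) * (d - (a - p)^2) ^ (-β-1)))
          (deriv (deriv (fun a => u (Function.update xb i a) tb)) (xb i)
            - (2*K*β * (d - (xb i - p)^2) ^ (-β-1)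
              + 4*K*β*(β+1) * ((xb i - p)^2 * (d - (xb i - p)^2) ^ (-β-2)))) (xb i) :=
        hgi2.sub (psi_deriv2 hGd)
      have hlocmax : IsLocalMax (fun a => u (Function.update xb i a) tb
          - Cc * (tb - s) ^ (-α) - K * (d - (a - p)^2) ^ (-β)) (xb i) := by
        have hGδ' : δx < d - (xb i - p)^2 := by rw [hdx]; exact hGδ
        have hev2 : ∀ᶠ a in nhds (xb i), δx < d - (a - p)^2 :=
          hcontb.eventually (eventually_gt_nhds hGδ')
        filter_upwards [hev2] with a ha
        have hr2a : r2 (Function.update xb i a) ≤ ρ := by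
          have h := hdG a
          simp only [hρ_def]
          linarith
        have haD : ((Function.update xb i a, tb) : (Fin N → ℝ) × ℝ) ∈ D := ⟨hr2a, htbI⟩
        have h := hmax' _ haD
        have e1 : v (Function.update xb i a, tb)
            = u (Function.update xb i a) tb - Cc * (tb - s) ^ (-α)
              - K * (d - (a - p)^2) ^ (-β) := by
          simp only [hv_def]
          rw [← hdG a]
        have e2 : v (xb, tb) = u (Function.update xb i (xb i)) tb
            - Cc * (tb - s) ^ (-α) - K * (d - (xb i - p)^2) ^ (-β) := by
          simp only [hv_def]
          rw [Function.update_eq_self, hdx]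
        have hfin : u (Function.update xb i a) tb - Cc * (tb - s) ^ (-α)
              - K * (d - (a - p)^2) ^ (-β)
            ≤ u (Function.update xb i (xb i)) tb - Cc * (tb - s) ^ (-α)
              - K * (d - (xb i - p)^2) ^ (-β) := by
          rw [← e1, ← e2]; exact h
        exact hfin
      have hc := second_deriv_nonpos_of_localmax hf hf' hlocmax
      rw [hdx] at hc
      simp only [hp_def] at hc
      linarith
    -- sum the space inequalities
    have hsum : ∑ i, deriv (deriv (fun a => u (Function.update xb i a) tb)) (xb i)
        ≤ N * (2*K*β * (R^2 - r2 xb) ^ (-β-1))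
          + 4*K*β*(β+1) * ((R^2 - r2 xb) ^ (-β-2) * r2 xb) := by
      calc ∑ i, deriv (deriv (fun a => u (Function.update xb i a) tb)) (xb i)
          ≤ ∑ i : Fin N, (2*K*β * (R^2 - r2 xb) ^ (-β-1)
            + 4*K*β*(β+1) * ((xb i - x₀ i)^2 * (R^2 - r2 xb) ^ (-β-2))) :=
            Finset.sum_le_sum fun i _ => hspace i
        _ = N * (2*K*β * (R^2 - r2 xb) ^ (-β-1))
            + 4*K*β*(β+1) * ((R^2 - r2 xb) ^ (-β-2) * r2 xb) := by
            rw [Finset.sum_add_distrib, Finset.sum_const, Finset.card_univ, Fintype.card_fin,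
              nsmul_eq_mul]
            congr 1
            rw [← Finset.mul_sum, ← Finset.sum_mul]
            simp only [hr2_def]
            ring
    -- the PDE at the max point
    have hpde := hsol xb tb htb_pos
    have hlap : lap N (fun y => u y tb) xb
        = ∑ i, deriv (deriv (fun a => u (Function.update xb i a) tb)) (xb i) :=
      lap_eq N (fun y => u y tb) xb
    rw [hlap] at hpde
    -- algebraic identities
    have hCq : Cc ^ q = α * Cc := by
      rw [hCc_def, ← Real.rpow_mul hq1.le,
        show -α * q = -1 + -α by simp only [hα_def]; field_simp; try ring
        ,
        Real.rpow_add hq1, Real.rpow_neg_one]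
      congr 1
      simp only [hα_def]; field_simp
    have hphiq : (Cc * (tb - s) ^ (-α)) ^ q = Cc * α * (tb - s) ^ (-α-1) := by
      rw [Real.mul_rpow hCc.le (Real.rpow_nonneg hτ.le _), ← Real.rpow_mul hτ.le, hCq,
        show -α * q = -α - 1 by simp only [hα_def]; field_simp; ring]
      ring
    have hKq : K ^ q = K * E := by
      rw [hK_def, ← Real.rpow_mul hE.le,
        show α * q = α + 1 by simp only [hα_def]; field_simp; try ring
        ,
        Real.rpow_add hE, Real.rpow_one]
    have hpsiq : (K * (R^2 - r2 xb) ^ (-β)) ^ q = K * E * (R^2 - r2 xb) ^ (-β-2) := by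
      rw [Real.mul_rpow hK.le (Real.rpow_nonneg hG.le _), ← Real.rpow_mul hG.le, hKq,
        show -β * q = -β - 2 by simp only [hβ_def]; field_simp; ring]
    have hG1 : (R^2 - r2 xb) ^ (-β-1) = (R^2 - r2 xb) * (R^2 - r2 xb) ^ (-β-2) := by
      rw [show -β-1 = 1 + (-β-2) by ring, Real.rpow_add hG, Real.rpow_one]
    -- bound the sum by ψ^q
    have hG2pos : 0 < (R^2 - r2 xb) ^ (-β-2) := Real.rpow_pos_of_pos hG _
    have hfac : N * (2*K*β * (R^2 - r2 xb) ^ (-β-1))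
        + 4*K*β*(β+1) * ((R^2 - r2 xb) ^ (-β-2) * r2 xb)
        ≤ K * E * (R^2 - r2 xb) ^ (-β-2) := by
      rw [hG1, hE_def]
      have h1 : (N:ℝ) * (2*β) * (R^2 - r2 xb) ≤ (N:ℝ) * (2*β) * R^2 :=
        mul_le_mul_of_nonneg_left hGR (by positivity)
      have h2 : 4*β*(β+1) * r2 xb ≤ 4*β*(β+1) * R^2 :=
        mul_le_mul_of_nonneg_left (by linarith) (by positivity)
      have hKA : 0 ≤ K * (R^2 - r2 xb) ^ (-β-2) := le_of_lt (mul_pos hK hG2pos)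
      have hlin : (N:ℝ)*(2*β)*(R^2 - r2 xb) + 4*β*(β+1)*(r2 xb)
          ≤ (2*N*β + 4*β*(β+1)) * R^2 := by linarith
      calc (N:ℝ) * (2*K*β * ((R^2 - r2 xb) * (R^2 - r2 xb) ^ (-β-2)))
            + 4*K*β*(β+1) * ((R^2 - r2 xb) ^ (-β-2) * r2 xb)
          = ((N:ℝ)*(2*β)*(R^2 - r2 xb) + 4*β*(β+1)*(r2 xb))
              * (K * (R^2 - r2 xb) ^ (-β-2)) := by ring
        _ ≤ ((2*N*β + 4*β*(β+1)) * R^2) * (K * (R^2 - r2 xb) ^ (-β-2)) :=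
            mul_le_mul_of_nonneg_right hlin hKA
        _ = K * ((2*N*β + 4*β*(β+1)) * R^2) * (R^2 - r2 xb) ^ (-β-2) := by ring
    -- strict inequality with u^q
    have hφnn : 0 ≤ Cc * (tb - s) ^ (-α) := by positivity
    have hψnn : 0 ≤ K * (R^2 - r2 xb) ^ (-β) := by positivity
    have h6 : Cc * (tb - s) ^ (-α) + K * (R^2 - r2 xb) ^ (-β) < u xb tb := by
      rw [hvval] at hpos; linarith
    have h7 : (Cc * (tb - s) ^ (-α)) ^ q + (K * (R^2 - r2 xb) ^ (-β)) ^ q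
        ≤ (Cc * (tb - s) ^ (-α) + K * (R^2 - r2 xb) ^ (-β)) ^ q :=
      add_rpow_ge hφnn hψnn hq.le
    have h8 : (Cc * (tb - s) ^ (-α) + K * (R^2 - r2 xb) ^ (-β)) ^ q < (u xb tb) ^ q :=
      Real.rpow_lt_rpow (by positivity) h6 (by linarith)
    rw [hphiq] at h7
    rw [hpsiq] at h7
    linarith
  -- conclude from the claim
  have hfin : v (x₀, t₀) ≤ 0 :=
    le_trans (hmax' (x₀, t₀) ⟨by simp only [mem_setOf_eq, hr2x₀]; exact hρpos.le,
      hs't₀.le, le_rfl⟩) hclaim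
  have : u x₀ t₀ ≤ Cc * (t₀ - s) ^ (-α) + K * (R^2 - r2 x₀) ^ (-β) := by
    simp only [hv_def] at hfin
    linarith
  rw [hr2x₀, sub_zero] at this
  exact this

set_option maxHeartbeats 1000000 in
/-- Every nonnegative classical solution `u` of `∂ₜ u − Δu + u^q = 0` on `ℝ^N × (0,∞)`
satisfies the universal a priori bound
`u(x,t) ≤ (q−1)^{−1/(q−1)} t^{−1/(q−1)}`. -/
theorem keller_osserman_parabolic_bound
    (N : ℕ) (q : ℝ) (hq : 1 < q)
    (u : (Fin N → ℝ) → ℝ → ℝ)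
    (hreg : ContDiffOn ℝ 2 (fun z : (Fin N → ℝ) × ℝ => u z.1 z.2) {z | 0 < z.2})
    (hnn : ∀ x t, 0 < t → 0 ≤ u x t)
    (hsol : ∀ x t, 0 < t →
      deriv (u x) t - lap N (fun y => u y t) x + u x t ^ q = 0) :
    ∀ x t, 0 < t →
      u x t ≤ (q - 1) ^ (-(1 / (q - 1))) * t ^ (-(1 / (q - 1))) := by
  intro x t ht
  have hq1 : (0:ℝ) < q - 1 := by linarith
  have hα : (0:ℝ) < 1/(q-1) := by positivity
  have hM : (0:ℝ) < 2*N*(2/(q-1)) + 4*(2/(q-1))*((2/(q-1))+1) := by positivity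
  refine le_of_forall_pos_le_add ?_
  intro ε hε
  -- simplify the tail term
  have hsimp : ∀ R : ℝ, 0 < R →
      ((2*N*(2/(q-1)) + 4*(2/(q-1))*((2/(q-1))+1)) * R^2) ^ (1/(q-1)) * (R^2) ^ (-(2/(q-1)))
      = (2*N*(2/(q-1)) + 4*(2/(q-1))*((2/(q-1))+1)) ^ (1/(q-1)) * (R^2) ^ (-(1/(q-1))) := by
    intro R hR
    rw [Real.mul_rpow hM.le (by positivity), mul_assoc,
      ← Real.rpow_add (by positivity : (0:ℝ) < R^2)]
    congr 1
    ring
  -- the tail tends to zero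
  have htendR : Filter.Tendsto (fun R : ℝ =>
      (2*N*(2/(q-1)) + 4*(2/(q-1))*((2/(q-1))+1)) ^ (1/(q-1)) * (R^2) ^ (-(1/(q-1))))
      Filter.atTop (nhds 0) := by
    have h1 : Filter.Tendsto (fun R : ℝ => R^2) Filter.atTop Filter.atTop :=
      tendsto_pow_atTop two_ne_zero
    have h2 : Filter.Tendsto (fun y : ℝ => y ^ (-(1/(q-1)))) Filter.atTop (nhds 0) :=
      tendsto_rpow_neg_atTop hα
    have := (h2.comp h1).const_mul
      ((2*N*(2/(q-1)) + 4*(2/(q-1))*((2/(q-1))+1)) ^ (1/(q-1)))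
    simpa using this
  obtain ⟨R, hRε, hRpos⟩ :=
    ((htendR.eventually (eventually_lt_nhds (show (0:ℝ) < ε/2 by positivity))).and
      (Filter.eventually_gt_atTop 0)).exists
  -- the φ term tends to the limit
  have hcont : ContinuousAt (fun s : ℝ => (q-1) ^ (-(1/(q-1))) * (t - s) ^ (-(1/(q-1)))) 0 := by
    refine ContinuousAt.mul continuousAt_const (ContinuousAt.rpow_const ?_ ?_)
    · exact (continuous_const.sub continuous_id).continuousAt
    · left; simp only [sub_zero, id]; exact ne_of_gt ht
  have htends : Filter.Tendsto (fun s : ℝ => (q-1) ^ (-(1/(q-1))) * (t - s) ^ (-(1/(q-1))))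
      (nhdsWithin 0 (Set.Ioi 0)) (nhds ((q-1) ^ (-(1/(q-1))) * t ^ (-(1/(q-1))))) := by
    have := hcont.tendsto.mono_left (nhdsWithin_le_nhds (s := Set.Ioi (0:ℝ)))
    simpa using this
  have hev2 : ∀ᶠ s : ℝ in nhdsWithin 0 (Set.Ioi 0),
      (q-1) ^ (-(1/(q-1))) * (t - s) ^ (-(1/(q-1)))
        < (q-1) ^ (-(1/(q-1))) * t ^ (-(1/(q-1))) + ε/2 :=
    htends.eventually (eventually_lt_nhds (by linarith))
  have hev3 : ∀ᶠ s : ℝ in nhdsWithin 0 (Set.Ioi 0), s < t :=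
    Filter.Eventually.filter_mono nhdsWithin_le_nhds (eventually_lt_nhds ht)
  obtain ⟨s, ⟨hsφ, hst⟩, hs2⟩ := ((hev2.and hev3).and self_mem_nhdsWithin).exists
  have hspos : (0:ℝ) < s := hs2
  have hcore := core_bound N q hq u hreg hnn hsol x t s R hspos hst hRpos
  rw [hsimp R hRpos] at hcore
  calc u x t ≤ (q-1) ^ (-(1/(q-1))) * (t - s) ^ (-(1/(q-1)))
        + (2*N*(2/(q-1)) + 4*(2/(q-1))*((2/(q-1))+1)) ^ (1/(q-1)) * (R^2) ^ (-(1/(q-1))) :=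
        hcore
    _ ≤ ((q-1) ^ (-(1/(q-1))) * t ^ (-(1/(q-1))) + ε/2) + ε/2 := by
        refine add_le_add hsφ.le hRε.le
    _ = (q-1) ^ (-(1/(q-1))) * t ^ (-(1/(q-1))) + ε := by ring
end

section
/- Let μ₀ be a positive Borel measure on ℝ^N which is essentially absolutely continuous relative to the capacity C (i.e., for every fine-open set Q and Borel set A with C(A) = 0, μ₀(Q \ A) = μ₀(Q)). Define μ(E) = inf{μ₀(D) : E ⊆ D, D fine-open} for every Borel set E. Then μ₀ ≤ μ on Borel sets, μ₀(Q) = μ(Q) for every fine-open set Q, and μ is essentially absolutely continuous and outer regular with respect to the fine topology (i.e., μ is T_q-perfect). -/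
open MeasureTheory Topology ENNReal

/-- Let `μ₀` be a positive Borel measure on `ℝ^N` essentially absolutely continuous
relative to the capacity `C` (for every `t'`-fine-open `Q` and Borel `A` with
`C A = 0`, `μ₀ (Q \ A) = μ₀ Q`), and let `m E = inf {μ₀ D : E ⊆ D, D fine-open}`.
Then `μ₀ ≤ m` on Borel sets, `μ₀ = m` on fine-open sets, and `m` is essentially
absolutely continuous and outer regular relative to the fine topology, i.e. `m` is
`T_q`-perfect. -/
theorem regularized_measure_is_perfect
    (N : ℕ)
    (t' : TopologicalSpace (EuclideanSpace ℝ (Fin N)))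
    (C : Set (EuclideanSpace ℝ (Fin N)) → ℝ≥0∞)
    (hCmono : ∀ ⦃A B : Set (EuclideanSpace ℝ (Fin N))⦄, A ⊆ B → C A ≤ C B)
    (μ₀ : Measure (EuclideanSpace ℝ (Fin N)))
    (hac : ∀ Q A : Set (EuclideanSpace ℝ (Fin N)), IsOpen[t'] Q → C A = 0 →
      μ₀ (Q \ A) = μ₀ Q)
    (m : Set (EuclideanSpace ℝ (Fin N)) → ℝ≥0∞)
    (hm : ∀ E : Set (EuclideanSpace ℝ (Fin N)),
      m E = ⨅ (D : Set (EuclideanSpace ℝ (Fin N))) (_ : E ⊆ D) (_ : IsOpen[t'] D), μ₀ D) :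
    (∀ E : Set (EuclideanSpace ℝ (Fin N)), MeasurableSet E → μ₀ E ≤ m E) ∧
    (∀ Q : Set (EuclideanSpace ℝ (Fin N)), IsOpen[t'] Q → m Q = μ₀ Q) ∧
    (∀ Q A : Set (EuclideanSpace ℝ (Fin N)), IsOpen[t'] Q → C A = 0 →
      m (Q \ A) = m Q) ∧
    (∀ E : Set (EuclideanSpace ℝ (Fin N)),
      m E = ⨅ (D : Set (EuclideanSpace ℝ (Fin N))) (_ : E ⊆ D) (_ : IsOpen[t'] D), m D) := by
  have h1 : ∀ E : Set (EuclideanSpace ℝ (Fin N)), μ₀ E ≤ m E := fun E => by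
    rw [hm]
    exact le_iInf fun D => le_iInf fun hED => le_iInf fun _ => measure_mono hED
  have h2 : ∀ Q : Set (EuclideanSpace ℝ (Fin N)), IsOpen[t'] Q → m Q = μ₀ Q := fun Q hQ => by
    refine le_antisymm ?_ (h1 Q)
    rw [hm]
    exact iInf₂_le_of_le Q subset_rfl (iInf_le _ hQ)
  refine ⟨fun E _ => h1 E, h2, fun Q A hQ hA => ?_, fun E => ?_⟩
  · refine le_antisymm ?_ ?_
    · rw [hm (Q \ A), hm Q]
      exact le_iInf fun D => le_iInf fun hQD => le_iInf fun hD =>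
        iInf₂_le_of_le D (Set.diff_subset.trans hQD) (iInf_le _ hD)
    · rw [hm (Q \ A)]
      refine le_iInf fun D => le_iInf fun hQD => le_iInf fun hD => ?_
      have hUopen : IsOpen[t'] (Q ∪ D) := @IsOpen.union _ Q D t' hQ hD
      have hsub : (Q ∪ D) \ A ⊆ D := by
        rintro x ⟨hx | hx, hxA⟩
        · exact hQD ⟨hx, hxA⟩
        · exact hx
      calc m Q ≤ μ₀ (Q ∪ D) := by
                rw [hm]
                exact iInf₂_le_of_le (Q ∪ D) Set.subset_union_left (iInf_le _ hUopen)
        _ = μ₀ ((Q ∪ D) \ A) := (hac _ A hUopen hA).symm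
        _ ≤ μ₀ D := measure_mono hsub
  · rw [hm E]
    exact iInf_congr fun D => iInf_congr fun hED => iInf_congr fun hD => (h2 D hD).symm
end
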